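/- arXiv:2602.09842 — 4 statements merged into one kernel-verified Lean document; each statement's English description precedes it below -/
import Mathlib

section
/- For the NGN model f_x(y,s) = (√f(x,s) + (1/(2√f(x,s)))⟨g, y-x⟩)², the proximal update gives x_{t+1} = x_t - γ_t g_t with γ_t = α_t/(1 + (α_t/(2f(x_t,s_t)))‖g_t‖²), and the stability index is δ_t^{NGN} = (γ_t/2)‖g_t‖², which satisfies δ_t^{NGN} ≤ (α_t/2)‖g_t‖². -/
set_option maxHeartbeats 1000000 in
/-- For the NGN model
`F y = (√f(x) + (1/(2√f(x)))⟨g, y-x⟩)²`, the proximal update gives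
`x₁ = x - γ • g` with `γ = α/(1 + (α/(2 f(x)))‖g‖²)`, the stability index is
`δ = (γ/2)‖g‖²`, and `δ ≤ (α/2)‖g‖²`. -/
theorem ngn_model_update_and_delta {d : ℕ} (f : EuclideanSpace ℝ (Fin d) → ℝ)
    (x g : EuclideanSpace ℝ (Fin d)) (α : ℝ) (hα : 0 < α)
    (hf : 0 < f x)
    (F : EuclideanSpace ℝ (Fin d) → ℝ)
    (hF : ∀ y, F y = (Real.sqrt (f x) + (1 / (2 * Real.sqrt (f x))) * (inner ℝ g (y - x) : ℝ)) ^ 2)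
    (γ : ℝ) (hγ : γ = α / (1 + (α / (2 * f x)) * ‖g‖ ^ 2)) :
    (∀ y, F (x - γ • g) + (1 / (2 * α)) * ‖(x - γ • g) - x‖ ^ 2
        ≤ F y + (1 / (2 * α)) * ‖y - x‖ ^ 2) ∧
    f x - F (x - γ • g) - (1 / (2 * α)) * ‖(x - γ • g) - x‖ ^ 2 = (γ / 2) * ‖g‖ ^ 2 ∧
    (γ / 2) * ‖g‖ ^ 2 ≤ (α / 2) * ‖g‖ ^ 2 := by
  have hN0 : (0:ℝ) ≤ ‖g‖ ^ 2 := sq_nonneg _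
  have hden : (0:ℝ) < 2 * f x + α * ‖g‖ ^ 2 := by positivity
  have hD : 0 < 1 + (α / (2 * f x)) * ‖g‖ ^ 2 := by positivity
  have hγ2 : γ = 2 * f x * α / (2 * f x + α * ‖g‖ ^ 2) := by
    rw [hγ]
    rw [div_eq_div_iff hD.ne' hden.ne']
    field_simp
  have hγ0 : 0 < γ := by rw [hγ2]; positivity
  have hγα : γ ≤ α := by
    rw [hγ2, div_le_iff₀ hden]; nlinarith [mul_nonneg (mul_nonneg hα.le hα.le) hN0]
  have hs : Real.sqrt (f x) ^ 2 = f x := Real.sq_sqrt hf.le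
  have hs0 : 0 < Real.sqrt (f x) := Real.sqrt_pos.mpr hf
  have hFexp : ∀ y, F y = f x + (inner ℝ g (y - x) : ℝ)
      + (inner ℝ g (y - x) : ℝ) ^ 2 / (4 * f x) := by
    intro y
    rw [hF y]
    set A := Real.sqrt (f x) with hA
    rw [← hs]
    field_simp
    ring
  have hvx : (x - γ • g) - x = -(γ • g) := by abel
  have hinner : (inner ℝ g ((x - γ • g) - x) : ℝ) = -(γ * ‖g‖ ^ 2) := by
    rw [hvx, inner_neg_right, real_inner_smul_right, real_inner_self_eq_norm_sq]
  have hnorm : ‖(x - γ • g) - x‖ ^ 2 = γ ^ 2 * ‖g‖ ^ 2 := by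
    rw [hvx, norm_neg, norm_smul, mul_pow, Real.norm_eq_abs, sq_abs]
  have hFx1 : F (x - γ • g) = f x - γ * ‖g‖ ^ 2 + (γ * ‖g‖ ^ 2) ^ 2 / (4 * f x) := by
    rw [hFexp, hinner]; ring
  refine ⟨?_, ?_, ?_⟩
  · intro y
    rw [hFexp y, hFx1, hnorm]
    set u : ℝ := (inner ℝ g (y - x) : ℝ) with hu
    set t : ℝ := ‖y - x‖ ^ 2 with ht
    have ht0 : 0 ≤ t := sq_nonneg _
    have hcs' : u ^ 2 ≤ ‖g‖ ^ 2 * t := by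
      have h := real_inner_mul_inner_self_le g (y - x)
      rw [real_inner_self_eq_norm_sq, real_inner_self_eq_norm_sq] at h
      nlinarith [h]
    rcases eq_or_lt_of_le hN0 with hNz | hNp
    · have hg0 : g = 0 := norm_eq_zero.mp (by
        have := hNz.symm
        exact pow_eq_zero_iff (n := 2) (by norm_num) |>.mp this)
      have hu0 : u = 0 := by simp [hu, hg0]
      rw [hu0, ← hNz]
      simp
      positivity
    · have h4 : 0 < 4 * f x * α * ‖g‖ ^ 2 := by positivity
      have hm : (f x + u + u ^ 2 / (4 * f x) + 1 / (2 * α) * t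
            - (f x - γ * ‖g‖ ^ 2 + (γ * ‖g‖ ^ 2) ^ 2 / (4 * f x)
               + 1 / (2 * α) * (γ ^ 2 * ‖g‖ ^ 2))) * (4 * f x * α * ‖g‖ ^ 2)
          = (α * ‖g‖ ^ 2 + 2 * f x) * (u + γ * ‖g‖ ^ 2) ^ 2
            + 2 * f x * (‖g‖ ^ 2 * t - u ^ 2) := by
        rw [hγ2]
        field_simp
        ring
      have hkey : 0 ≤ (f x + u + u ^ 2 / (4 * f x) + 1 / (2 * α) * t
            - (f x - γ * ‖g‖ ^ 2 + (γ * ‖g‖ ^ 2) ^ 2 / (4 * f x)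
               + 1 / (2 * α) * (γ ^ 2 * ‖g‖ ^ 2))) * (4 * f x * α * ‖g‖ ^ 2) := by
        rw [hm]
        have h5 : 0 ≤ ‖g‖ ^ 2 * t - u ^ 2 := by linarith
        have h6 : 0 ≤ (α * ‖g‖ ^ 2 + 2 * f x) * (u + γ * ‖g‖ ^ 2) ^ 2 := by positivity
        nlinarith
      nlinarith [hkey, h4]
  · rw [hFx1, hnorm, hγ2]
    field_simp
    ring
  · have h : γ / 2 ≤ α / 2 := by linarith
    exact mul_le_mul_of_nonneg_right h hN0
end

section
/- Single-step inequality: under assumptions (A1)-(A2), for any u ∈ ℝ^d, the model-based proximal update x_{t+1} satisfies (1/2)‖x_{t+1}-u‖² - (1/2)‖x_t-u‖² ≤ -α_t[f(x_t,s_t) - f(u,s_t)] + α_t δ_t, where δ_t is the stability index. -/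
open scoped RealInnerProductSpace

set_option maxHeartbeats 1000000 in
/-- Single-step inequality. Under (A1) convexity of the model and (A2)
exactness/lower-bound, for any `u`, the model-based proximal update `x₁` satisfies
`(1/2)‖x₁-u‖² - (1/2)‖x-u‖² ≤ -α (f x - f u) + α δ`. -/
theorem single_step_inequality {d : ℕ} (f F : EuclideanSpace ℝ (Fin d) → ℝ)
    (hA1 : ConvexOn ℝ Set.univ F)
    (x : EuclideanSpace ℝ (Fin d))
    (hA2_exact : F x = f x)
    (hA2_lower : ∀ y, F y ≤ f y)
    (α : ℝ) (hα : 0 < α)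
    (x₁ : EuclideanSpace ℝ (Fin d))
    (hmin : ∀ y, F x₁ + (1 / (2 * α)) * ‖x₁ - x‖ ^ 2 ≤ F y + (1 / (2 * α)) * ‖y - x‖ ^ 2)
    (δ : ℝ) (hδ : δ = f x - F x₁ - (1 / (2 * α)) * ‖x₁ - x‖ ^ 2)
    (u : EuclideanSpace ℝ (Fin d)) :
    (1 / 2) * ‖x₁ - u‖ ^ 2 - (1 / 2) * ‖x - u‖ ^ 2 ≤ -α * (f x - f u) + α * δ := by
  set a : EuclideanSpace ℝ (Fin d) := x₁ - x with ha
  set v : EuclideanSpace ℝ (Fin d) := u - x₁ with hv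
  have hα' : α ≠ 0 := ne_of_gt hα
  -- Key first-order optimality inequality
  have key : α * F x₁ ≤ α * F u + (inner ℝ a v : ℝ) := by
    apply le_of_forall_pos_le_add
    intro ε hε
    have hden : (0:ℝ) < α * ‖v‖ ^ 2 + 1 := by positivity
    set t : ℝ := min 1 (2 * ε / (‖v‖ ^ 2 + 1)) with ht
    have hden2 : (0:ℝ) < ‖v‖ ^ 2 + 1 := by positivity
    have ht0 : 0 < t := lt_min one_pos (by positivity)
    have ht1 : t ≤ 1 := min_le_left _ _
    have htε : t * ‖v‖ ^ 2 ≤ 2 * ε := by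
      have h1 : t ≤ 2 * ε / (‖v‖ ^ 2 + 1) := min_le_right _ _
      have h2 : t * (‖v‖ ^ 2 + 1) ≤ 2 * ε := by
        rw [← le_div_iff₀ hden2]; exact h1
      nlinarith [ht0.le]
    -- convex combination point
    have hy : x₁ + t • v = (1 - t) • x₁ + t • u := by
      rw [hv]; module
    have hconv : F ((1 - t) • x₁ + t • u) ≤ (1 - t) * F x₁ + t * F u :=
      hA1.2 (Set.mem_univ x₁) (Set.mem_univ u) (by linarith) ht0.le (by ring)
    have hm := hmin (x₁ + t • v)
    have hnorm : ‖x₁ + t • v - x‖ ^ 2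
        = ‖a‖ ^ 2 + 2 * (t * (inner ℝ a v : ℝ)) + t ^ 2 * ‖v‖ ^ 2 := by
      have hyx : x₁ + t • v - x = a + t • v := by rw [ha]; module
      rw [hyx, norm_add_sq_real, real_inner_smul_right, norm_smul]
      rw [Real.norm_eq_abs, mul_pow, sq_abs]
    rw [hnorm, hy] at hm
    have step : t * F x₁ ≤ t * F u
        + (1 / (2 * α)) * (2 * (t * (inner ℝ a v : ℝ)) + t ^ 2 * ‖v‖ ^ 2) := by
      nlinarith [hm, hconv]
    have step2 : 2 * α * (t * F x₁) ≤ 2 * α * (t * F u)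
        + (2 * (t * (inner ℝ a v : ℝ)) + t ^ 2 * ‖v‖ ^ 2) := by
      have h := mul_le_mul_of_nonneg_left step (by linarith : (0:ℝ) ≤ 2 * α)
      have hS : 2 * α * (t * F u
          + 1 / (2 * α) * (2 * (t * (inner ℝ a v : ℝ)) + t ^ 2 * ‖v‖ ^ 2))
          = 2 * α * (t * F u) + (2 * (t * (inner ℝ a v : ℝ)) + t ^ 2 * ‖v‖ ^ 2) := by
        field_simp
      linarith [h, hS.le, hS.ge]
    -- divide by t and bound the t-term by ε
    nlinarith [step2, ht0, htε, hα, mul_pos hα ht0]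
  -- norm algebra
  have hxu : ‖x₁ - u‖ ^ 2 = ‖v‖ ^ 2 := by
    rw [hv, ← norm_neg]; congr 1; abel
  have hxu2 : ‖x - u‖ ^ 2 = ‖a‖ ^ 2 + 2 * (inner ℝ a v : ℝ) + ‖v‖ ^ 2 := by
    have h : x - u = -(a + v) := by rw [ha, hv]; abel
    rw [h, norm_neg, norm_add_sq_real]
  have hFu := hA2_lower u
  have hdelta : α * δ = α * f x - α * F x₁ - (1 / 2) * ‖a‖ ^ 2 := by
    rw [hδ, ha]; field_simp
  rw [hxu, hxu2]
  nlinarith [sq_nonneg ‖a‖]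
end

section
/- Deterministic average-iterate bound: under assumptions (A1)-(A2), for iterates generated by the model-based proximal update and any x_⋆ ∈ ℝ^d, it holds min_{t=1..T} [f(x_t,s_t) - f(x_⋆,s_t)] ≤ ‖x_1-x_⋆‖²/(2∑_{t=1}^T α_t) + (∑_{t=1}^T α_t δ_t)/(∑_{t=1}^T α_t). -/
lemma combo_norm_sq {E : Type*} [NormedAddCommGroup E] [InnerProductSpace ℝ E]
    (a b : E) (l : ℝ) :
    ‖(1 - l) • a + l • b‖ ^ 2
      = (1 - l) * ‖a‖ ^ 2 + l * ‖b‖ ^ 2 - l * (1 - l) * ‖a - b‖ ^ 2 := by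
  have h := @norm_add_sq_real E _ _ ((1 - l) • a) (l • b)
  have h2 := @norm_sub_sq_real E _ _ a b
  simp only [norm_smul, inner_smul_left, inner_smul_right, Real.norm_eq_abs,
    mul_pow, sq_abs, starRingEnd_apply, star_trivial] at h ⊢
  rw [h]
  nlinarith [h2, real_inner_self_eq_norm_sq a, real_inner_self_eq_norm_sq b]

lemma prox_growth {E : Type*} [NormedAddCommGroup E] [InnerProductSpace ℝ E]
    (F : E → ℝ) (hF : ConvexOn ℝ Set.univ F) (c : ℝ) (hc : 0 < c) (x₀ xp : E)
    (hmin : ∀ y, F xp + c * ‖xp - x₀‖ ^ 2 ≤ F y + c * ‖y - x₀‖ ^ 2) (y : E) :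
    F xp + c * ‖xp - x₀‖ ^ 2 + c * ‖y - xp‖ ^ 2 ≤ F y + c * ‖y - x₀‖ ^ 2 := by
  have key : ∀ l : ℝ, 0 < l → l < 1 →
      F xp + c * ‖xp - x₀‖ ^ 2 + (1 - l) * (c * ‖y - xp‖ ^ 2)
        ≤ F y + c * ‖y - x₀‖ ^ 2 := by
    intro l hl0 hl1
    have hz := hmin ((1 - l) • xp + l • y)
    have hconv := hF.2 (Set.mem_univ xp) (Set.mem_univ y)
      (by linarith : (0:ℝ) ≤ 1 - l) (le_of_lt hl0) (by ring)
    have hid : ((1 - l) • xp + l • y) - x₀ = (1 - l) • (xp - x₀) + l • (y - x₀) := by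
      module
    have hnorm := combo_norm_sq (xp - x₀) (y - x₀) l
    rw [hid, hnorm] at hz
    have hsub : (xp - x₀) - (y - x₀) = xp - y := by abel
    rw [hsub] at hz
    have hyy : ‖y - xp‖ = ‖xp - y‖ := norm_sub_rev _ _
    rw [hyy]
    simp only [smul_eq_mul] at hconv
    nlinarith [hz, hconv, sq_nonneg ‖xp - y‖]
  apply le_of_forall_pos_le_add
  intro ε hε
  set l : ℝ := min (1/2) (ε / (c * (‖y - xp‖ ^ 2 + 1))) with hl
  have hden : 0 < c * (‖y - xp‖ ^ 2 + 1) := by positivity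
  have hl0 : 0 < l := lt_min (by norm_num) (div_pos hε hden)
  have hl1 : l < 1 := lt_of_le_of_lt (min_le_left _ _) (by norm_num)
  have hk := key l hl0 hl1
  have hle : l * (c * ‖y - xp‖ ^ 2) ≤ ε := by
    have h1 : l ≤ ε / (c * (‖y - xp‖ ^ 2 + 1)) := min_le_right _ _
    have h2 : c * ‖y - xp‖ ^ 2 ≤ c * (‖y - xp‖ ^ 2 + 1) := by nlinarith
    calc l * (c * ‖y - xp‖ ^ 2) ≤ (ε / (c * (‖y - xp‖ ^ 2 + 1))) * (c * (‖y - xp‖ ^ 2 + 1)) := by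
          apply mul_le_mul h1 h2 (by positivity) (by positivity)
      _ = ε := div_mul_cancel₀ _ (ne_of_gt hden)
  nlinarith [hk, hle]


/-- Deterministic average-iterate bound. Under (A1)-(A2), for iterates of
the model-based proximal update and any `x⋆`, it holds
`min_{t=1..T} [f_t(x_t) - f_t(x⋆)] ≤ ‖x₁-x⋆‖²/(2∑α_t) + (∑ α_t δ_t)/(∑ α_t)`. -/
theorem avg_iterate_bound {d : ℕ}
    (f F : ℕ → EuclideanSpace ℝ (Fin d) → ℝ)
    (α : ℕ → ℝ) (hα : ∀ t, 0 < α t)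
    (x : ℕ → EuclideanSpace ℝ (Fin d))
    (hA1 : ∀ t, ConvexOn ℝ Set.univ (F t))
    (hA2_exact : ∀ t, F t (x t) = f t (x t))
    (hA2_lower : ∀ t y, F t y ≤ f t y)
    (hmin : ∀ t y, F t (x (t + 1)) + (1 / (2 * α t)) * ‖x (t + 1) - x t‖ ^ 2
        ≤ F t y + (1 / (2 * α t)) * ‖y - x t‖ ^ 2)
    (δ : ℕ → ℝ)
    (hδ : ∀ t, δ t = f t (x t) - F t (x (t + 1)) - (1 / (2 * α t)) * ‖x (t + 1) - x t‖ ^ 2)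
    (T : ℕ) (hT : 1 ≤ T)
    (xstar : EuclideanSpace ℝ (Fin d)) :
    ∃ t ∈ Finset.Icc 1 T,
      f t (x t) - f t xstar ≤
        ‖x 1 - xstar‖ ^ 2 / (2 * ∑ t ∈ Finset.Icc 1 T, α t) +
          (∑ t ∈ Finset.Icc 1 T, α t * δ t) / (∑ t ∈ Finset.Icc 1 T, α t) := by
  have hne : (Finset.Icc 1 T).Nonempty := ⟨1, Finset.mem_Icc.mpr ⟨le_refl 1, hT⟩⟩
  set S : ℝ := ∑ t ∈ Finset.Icc 1 T, α t with hS
  have hSpos : 0 < S := Finset.sum_pos (fun t _ => hα t) hne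
  -- per-step inequality
  have step : ∀ t, α t * (f t (x t) - f t xstar)
      ≤ α t * δ t + (1/2) * (‖x t - xstar‖ ^ 2 - ‖x (t+1) - xstar‖ ^ 2) := by
    intro t
    have hc : (0:ℝ) < 1 / (2 * α t) := div_pos one_pos (by linarith [hα t])
    have hg := prox_growth (F t) (hA1 t) (1 / (2 * α t)) hc (x t) (x (t+1))
      (hmin t) xstar
    have hδt := hδ t
    have hlow := hA2_lower t xstar
    have h1 : f t (x t) + (1 / (2 * α t)) * ‖xstar - x (t+1)‖ ^ 2
        ≤ f t xstar + (1 / (2 * α t)) * ‖xstar - x t‖ ^ 2 + δ t := by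
      nlinarith [hg, hδt, hlow]
    have e1 : ‖xstar - x (t+1)‖ = ‖x (t+1) - xstar‖ := norm_sub_rev _ _
    have e2 : ‖xstar - x t‖ = ‖x t - xstar‖ := norm_sub_rev _ _
    rw [e1, e2] at h1
    have hαt := hα t
    have hcancel : α t * (1 / (2 * α t)) = 1/2 := by
      have hne0 : α t ≠ 0 := hαt.ne'
      field_simp
    nlinarith [mul_le_mul_of_nonneg_left h1 (le_of_lt hαt)]
  -- telescoping sum
  have htel' : ∀ n : ℕ, 1 ≤ n → ∑ t ∈ Finset.Icc 1 n, (‖x t - xstar‖ ^ 2 - ‖x (t+1) - xstar‖ ^ 2)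
      = ‖x 1 - xstar‖ ^ 2 - ‖x (n+1) - xstar‖ ^ 2 := by
    intro n hn
    induction n with
    | zero => omega
    | succ k ih =>
      rcases Nat.lt_or_ge k 1 with hk | hk
      · interval_cases k
        simp
      · rw [Finset.sum_Icc_succ_top (by omega : 1 ≤ k + 1), ih hk]
        ring
  have htel := htel' T hT
  have hsum : ∑ t ∈ Finset.Icc 1 T, α t * (f t (x t) - f t xstar)
      ≤ (∑ t ∈ Finset.Icc 1 T, α t * δ t) + ‖x 1 - xstar‖ ^ 2 / 2 := by
    calc ∑ t ∈ Finset.Icc 1 T, α t * (f t (x t) - f t xstar)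
        ≤ ∑ t ∈ Finset.Icc 1 T,
            (α t * δ t + (1/2) * (‖x t - xstar‖ ^ 2 - ‖x (t+1) - xstar‖ ^ 2)) :=
          Finset.sum_le_sum (fun t _ => step t)
      _ = (∑ t ∈ Finset.Icc 1 T, α t * δ t)
            + (1/2) * (‖x 1 - xstar‖ ^ 2 - ‖x (T+1) - xstar‖ ^ 2) := by
          rw [Finset.sum_add_distrib, ← Finset.mul_sum, htel]
      _ ≤ (∑ t ∈ Finset.Icc 1 T, α t * δ t) + ‖x 1 - xstar‖ ^ 2 / 2 := by
          nlinarith [sq_nonneg ‖x (T+1) - xstar‖]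
  -- pick minimizer
  obtain ⟨m, hm, hmmin⟩ := Finset.exists_min_image (Finset.Icc 1 T)
    (fun t => f t (x t) - f t xstar) hne
  refine ⟨m, hm, ?_⟩
  have hlb : S * (f m (x m) - f m xstar)
      ≤ ∑ t ∈ Finset.Icc 1 T, α t * (f t (x t) - f t xstar) := by
    rw [hS, Finset.sum_mul]
    exact Finset.sum_le_sum (fun t ht =>
      mul_le_mul_of_nonneg_left (hmmin t ht) (le_of_lt (hα t)))
  have hfinal : S * (f m (x m) - f m xstar)
      ≤ (∑ t ∈ Finset.Icc 1 T, α t * δ t) + ‖x 1 - xstar‖ ^ 2 / 2 :=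
    le_trans hlb hsum
  rw [div_add_div _ _ (by positivity) (ne_of_gt hSpos)]
  rw [le_div_iff₀ (by positivity)]
  nlinarith [hfinal, hSpos]
end

section
/- For the log-exp model, the proximal update is x_{t+1} = x_t - γ_t g_t where γ_t solves γ_t = α_t exp(-γ_t ‖g_t‖²/f(x_t,s_t)); if g_t ≠ 0, the unique positive solution is γ_t = (f(x_t,s_t)/‖g_t‖²)·W₀(α_t ‖g_t‖²/f(x_t,s_t)), where W₀ is the principal branch of the Lambert W function. -/
/-- Injectivity of `z ↦ z * exp z` on nonnegative reals. -/
lemma zexp_inj_nonneg {a b : ℝ} (ha : 0 ≤ a) (hb : 0 ≤ b)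
    (h : a * Real.exp a = b * Real.exp b) : a = b := by
  rcases lt_trichotomy a b with h1 | h1 | h1
  · exfalso
    have hb0 : 0 < b := lt_of_le_of_lt ha h1
    nlinarith [Real.exp_lt_exp.mpr h1, Real.exp_pos a, Real.exp_pos b]
  · exact h1
  · exfalso
    have ha0 : 0 < a := lt_of_le_of_lt hb h1
    nlinarith [Real.exp_lt_exp.mpr h1, Real.exp_pos a, Real.exp_pos b]

/-- Final arithmetic step for the proximal inequality. -/
lemma logexp_arith (α ft u γ N A E : ℝ) (hα : 0 < α)
    (hb1 : (γ / α) * (ft + u + γ * N) ≤ E)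
    (hsq : 0 ≤ A + 2 * (γ * u) + γ ^ 2 * N) :
    ft * (γ / α) + (1 / (2 * α)) * (γ ^ 2 * N) ≤ E + (1 / (2 * α)) * A := by
  rw [← sub_nonneg]
  have key : E + (1 / (2 * α)) * A - (ft * (γ / α) + (1 / (2 * α)) * (γ ^ 2 * N))
      = (1 / (2 * α)) * ((2 * α * E + A) - (2 * ft * γ + γ ^ 2 * N)) := by
    field_simp
  rw [key]
  apply mul_nonneg (by positivity)
  have h1 : 2 * γ * (ft + u + γ * N) ≤ 2 * α * E := by
    have h := mul_le_mul_of_nonneg_left hb1 (by linarith : (0:ℝ) ≤ 2 * α)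
    calc 2 * γ * (ft + u + γ * N) = 2 * α * ((γ / α) * (ft + u + γ * N)) := by
          field_simp
      _ ≤ 2 * α * E := h
  nlinarith [h1, hsq]

/-- For the log-exp model
`F y = exp(log f_t + (1/f_t)⟨g, y-x⟩)`, the proximal update is `x₁ = x - γ • g` where
`γ` solves `γ = α exp(-γ‖g‖²/f_t)`; if `g ≠ 0`, the unique positive solution is
`γ = (f_t/‖g‖²)·W₀(α‖g‖²/f_t)`, with `W₀` the principal branch of the Lambert W
function, i.e. the inverse of `z ↦ z e^z` on `[0,∞)`. -/
theorem logexp_model_update {d : ℕ} (ft : ℝ) (hft : 0 < ft)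
    (g x : EuclideanSpace ℝ (Fin d)) (hg : g ≠ 0) (α : ℝ) (hα : 0 < α)
    (F : EuclideanSpace ℝ (Fin d) → ℝ)
    (hF : ∀ y, F y = Real.exp (Real.log ft + (1 / ft) * (inner ℝ g (y - x) : ℝ)))
    (W : ℝ → ℝ)
    (hW_nonneg : ∀ z ≥ (0 : ℝ), 0 ≤ W z)
    (hW_inv : ∀ z ≥ (0 : ℝ), W z * Real.exp (W z) = z)
    (γ : ℝ) (hγ : γ = (ft / ‖g‖ ^ 2) * W (α * ‖g‖ ^ 2 / ft)) :
    γ = α * Real.exp (-(γ * ‖g‖ ^ 2 / ft)) ∧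
    (∀ γ' > (0 : ℝ), γ' = α * Real.exp (-(γ' * ‖g‖ ^ 2 / ft)) → γ' = γ) ∧
    (∀ y, F (x - γ • g) + (1 / (2 * α)) * ‖(x - γ • g) - x‖ ^ 2
        ≤ F y + (1 / (2 * α)) * ‖y - x‖ ^ 2) := by
  have hng : (0:ℝ) < ‖g‖ ^ 2 := pow_pos (norm_pos_iff.mpr hg) 2
  set a : ℝ := α * ‖g‖ ^ 2 / ft with ha_def
  have ha : 0 < a := by positivity
  have hWnn : 0 ≤ W a := hW_nonneg a ha.le
  have hWinv : W a * Real.exp (W a) = a := hW_inv a ha.le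
  have hWpos : 0 < W a := by
    rcases hWnn.lt_or_eq with h | h
    · exact h
    · exfalso; rw [← h, zero_mul] at hWinv; linarith
  have hγpos : 0 < γ := by
    rw [hγ]; exact mul_pos (div_pos hft hng) hWpos
  have hγng : γ * ‖g‖ ^ 2 / ft = W a := by
    rw [hγ]; field_simp
  have hexpW : Real.exp (W a) = a / W a := by
    field_simp [hWpos.ne']
    linarith [hWinv]
  have h1 : γ = α * Real.exp (-(γ * ‖g‖ ^ 2 / ft)) := by
    rw [hγng, Real.exp_neg, hexpW, hγ, ha_def]
    field_simp
  refine ⟨h1, ?_, ?_⟩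
  · intro γ' hγ' heq
    have hb : (0:ℝ) ≤ γ' * ‖g‖ ^ 2 / ft := by positivity
    have key : (γ' * ‖g‖ ^ 2 / ft) * Real.exp (γ' * ‖g‖ ^ 2 / ft)
        = W a * Real.exp (W a) := by
      rw [hWinv, ha_def]
      rw [Real.exp_neg] at heq
      have hexp := Real.exp_pos (γ' * ‖g‖ ^ 2 / ft)
      field_simp at heq ⊢
      nlinarith [heq]
    have := zexp_inj_nonneg hb hWnn key
    rw [hγ, ← this]
    field_simp
  · intro y
    set u : ℝ := (inner ℝ g (y - x) : ℝ) with hu_def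
    have hFy : F y = ft * Real.exp ((1/ft) * u) := by
      rw [hF, Real.exp_add, Real.exp_log hft]
    have hsub : (x - γ • g) - x = -(γ • g) := by abel
    have hinner : (inner ℝ g ((x - γ • g) - x) : ℝ) = -(γ * ‖g‖ ^ 2) := by
      rw [hsub, inner_neg_right, real_inner_smul_right, real_inner_self_eq_norm_sq]
    have hFmin : F (x - γ • g) = ft * Real.exp (-(γ * ‖g‖ ^ 2 / ft)) := by
      rw [hF, hinner, Real.exp_add, Real.exp_log hft]
      ring_nf
    have hnorm : ‖(x - γ • g) - x‖ ^ 2 = γ ^ 2 * ‖g‖ ^ 2 := by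
      rw [hsub, norm_neg, norm_smul, mul_pow, Real.norm_eq_abs, sq_abs]
    have hexpand : ‖(y - x) + γ • g‖ ^ 2
        = ‖y - x‖ ^ 2 + 2 * (γ * u) + γ ^ 2 * ‖g‖ ^ 2 := by
      rw [norm_add_sq_real, real_inner_smul_right, norm_smul, mul_pow,
        Real.norm_eq_abs, sq_abs, real_inner_comm, ← hu_def]
    have hexpval : Real.exp (-(γ * ‖g‖ ^ 2 / ft)) = γ / α := by
      rw [eq_div_iff hα.ne']
      linarith [h1]
    have hsplit : Real.exp ((1/ft) * u)
        = Real.exp (-(γ * ‖g‖ ^ 2 / ft)) * Real.exp ((1/ft) * u + γ * ‖g‖ ^ 2 / ft) := by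
      rw [← Real.exp_add]; ring_nf
    have hle : ((1/ft) * u + γ * ‖g‖ ^ 2 / ft) + 1
        ≤ Real.exp ((1/ft) * u + γ * ‖g‖ ^ 2 / ft) := Real.add_one_le_exp _
    have hb1 : ft * Real.exp ((1/ft) * u)
        ≥ (γ / α) * (ft + u + γ * ‖g‖ ^ 2) := by
      rw [hsplit, hexpval]
      have hγα : 0 < γ / α := div_pos hγpos hα
      have h2 : ft * ((γ/α) * Real.exp ((1/ft) * u + γ * ‖g‖ ^ 2 / ft))
          ≥ ft * ((γ/α) * (((1/ft) * u + γ * ‖g‖ ^ 2 / ft) + 1)) := by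
        have := mul_le_mul_of_nonneg_left hle hγα.le
        nlinarith
      calc ft * ((γ/α) * Real.exp ((1/ft) * u + γ * ‖g‖ ^ 2 / ft))
          ≥ ft * ((γ/α) * (((1/ft) * u + γ * ‖g‖ ^ 2 / ft) + 1)) := h2
        _ = (γ / α) * (ft + u + γ * ‖g‖ ^ 2) := by field_simp; ring
    rw [hFy, hFmin, hnorm, hexpval]
    have hsq := sq_nonneg ‖(y - x) + γ • g‖
    rw [hexpand] at hsq
    exact logexp_arith α ft u γ (‖g‖ ^ 2) (‖y - x‖ ^ 2) (ft * Real.exp ((1/ft) * u))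
      hα hb1 (by linarith [hsq])
end
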